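/- Let n ≥ 1 and let G0 be an induced subgraph of the n-blow-up of the 5-cycle C5 with |V(G0)| = pn + q, where p, q are nonnegative integers with p < 5 and q < n. Then e(G0) ≥ f(n,p,q), where f(n,p,q) = 0 if p ≤ 1; qn if p = 2; n² + 2qn if p = 3; and 3n² + 2qn if p = 4. -/

import Mathlib

open scoped Classical

/-- The number of edges of `G` with both endpoints in `A`. -/
noncomputable def edgesIn {V : Type*} [Fintype V] (G : SimpleGraph V) (A : Finset V) : ℕ :=
  (G.edgeFinset.filter fun e => ∀ v ∈ e, v ∈ A).card

/-- The `n`-blow-up of the 5-cycle: classes `A_i = {i} × Fin n`, with `x` adjacent to `y`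
iff their classes are consecutive on the cycle. -/
def C5blowup (n : ℕ) : SimpleGraph (Fin 5 × Fin n) where
  Adj x y := ((y.1 : ZMod 5) = (x.1 : ZMod 5) + 1) ∨ ((x.1 : ZMod 5) = (y.1 : ZMod 5) + 1)
  symm := ⟨by intro x y h; tauto⟩
  loopless := ⟨by intro x h; rcases h with h | h <;> simp at h⟩

/-!
Let `a i` be the number of vertices of `G0` in class `i`, so that
`e(G0) = ∑ a i * a (i + 1)`, `0 ≤ a i ≤ n` and `∑ a i = p * n + q`. Expanding
`∑ (n - a i) * (n - a (i + 1)) ≥ 0` gives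
`e(G0) ≥ 2 n ∑ a i - 5 n²`, which is the bound for
`p = 3, 4`. For `p = 2`, either two nonadjacent classes together hold at least `n` vertices,
and an explicit sum of nonnegative terms gives `e(G0) ≥ q n`, or every `a i` exceeds `q`,
and then `e(G0) ≥ q ∑ a (i + 1) ≥ q n`.
-/

open Finset

section CyclicPairSum

variable {m : ℕ} [NeZero m] {R : Type*}

def cyclicPairSum [CommSemiring R] (a : ZMod m → R) : R :=
  ∑ i, a i * a (i + 1)

lemma sum_comp_add_right [AddCommMonoid R] (a : ZMod m → R) (k : ZMod m) :
    ∑ i, a (i + k) = ∑ i, a i :=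
  Equiv.sum_comp (Equiv.addRight k) a

lemma cyclicPairSum_comp_add_right [CommSemiring R] (a : ZMod m → R) (k : ZMod m) :
    cyclicPairSum (fun i => a (i + k)) = cyclicPairSum a := by
  simp only [cyclicPairSum, add_right_comm _ 1 k]
  exact sum_comp_add_right (fun i => a i * a (i + 1)) k

lemma sum_zmod_five [AddCommMonoid R] (a : ZMod 5 → R) :
    ∑ i, a i = a 0 + a 1 + a 2 + a 3 + a 4 :=
  Fin.sum_univ_five a

lemma cyclicPairSum_five [CommSemiring R] (a : ZMod 5 → R) :
    cyclicPairSum a = a 0 * a 1 + a 1 * a 2 + a 2 * a 3 + a 3 * a 4 + a 4 * a 0 :=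
  Fin.sum_univ_five _

variable [CommRing R] [LinearOrder R] [IsStrictOrderedRing R]

lemma two_mul_mul_sum_sub_le_cyclicPairSum {a : ZMod m → R} {n : R} (ha : ∀ i, a i ≤ n) :
    2 * n * ∑ i, a i - m * n ^ 2 ≤ cyclicPairSum a := by
  have key : 0 ≤ ∑ i, (n - a i) * (n - a (i + 1)) :=
    sum_nonneg fun i _ => mul_nonneg (sub_nonneg.2 (ha i)) (sub_nonneg.2 (ha (i + 1)))
  have hshift := sum_comp_add_right a 1
  simp only [sub_mul, mul_sub, sum_sub_distrib, sum_const, card_univ, ZMod.card,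
    nsmul_eq_mul, ← mul_sum, ← sum_mul, hshift] at key
  unfold cyclicPairSum
  linear_combination key

lemma mul_sum_le_cyclicPairSum {a : ZMod m → R} {q : R} (h0 : ∀ i, 0 ≤ a i)
    (hq : ∀ i, q ≤ a i) : q * ∑ i, a i ≤ cyclicPairSum a := by
  rw [← sum_comp_add_right a 1, mul_sum]
  exact sum_le_sum fun i _ => mul_le_mul_of_nonneg_right (hq i) (h0 (i + 1))

lemma mul_sub_le_cyclicPairSum_of_le_add {a : ZMod 5 → R} {n : R} (h0 : ∀ i, 0 ≤ a i)
    (hle : ∀ i, a i ≤ n) (h13 : n ≤ a 1 + a 3) :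
    n * (∑ i, a i - 2 * n) ≤ cyclicPairSum a := by
  -- `cyclicPairSum a - n (∑ a - 2n)`
  --   `= (n - a₀)(n - a₁) + (n - a₃)(n - a₄) + a₂ (a₁ + a₃ - n) + a₄ a₀`
  have h01 := mul_nonneg (sub_nonneg.2 (hle 0)) (sub_nonneg.2 (hle 1))
  have h34 := mul_nonneg (sub_nonneg.2 (hle 3)) (sub_nonneg.2 (hle 4))
  have h2 := mul_nonneg (h0 2) (sub_nonneg.2 h13)
  have h40 := mul_nonneg (h0 4) (h0 0)
  rw [sum_zmod_five, cyclicPairSum_five]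
  linear_combination h01 + h34 + h2 + h40

lemma mul_le_cyclicPairSum_of_sum_eq {a : ZMod 5 → R} {n q : R} (h0 : ∀ i, 0 ≤ a i)
    (hle : ∀ i, a i ≤ n) (hq : 0 ≤ q) (hsum : ∑ i, a i = 2 * n + q) :
    q * n ≤ cyclicPairSum a := by
  by_cases heavy : ∃ k, n ≤ a (1 + k) + a (3 + k)
  · obtain ⟨k, hk⟩ := heavy
    have := mul_sub_le_cyclicPairSum_of_le_add (a := fun i => a (i + k)) (fun i => h0 _)
      (fun i => hle _) hk
    rw [cyclicPairSum_comp_add_right, sum_comp_add_right, hsum] at this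
    linear_combination this
  push Not at heavy
  -- `a i` is the total minus the two nonadjacent pairs `{i+1, i+3}` and `{i+2, i+4}`.
  have hq_le : ∀ i, q ≤ a i := fun i => by
    have h1 := heavy i
    have h2 := heavy (i + 1)
    have hs := sum_comp_add_right a i
    rw [sum_zmod_five, hsum] at hs
    ring_nf at h1 h2 hs
    linarith
  have := mul_sum_le_cyclicPairSum h0 hq_le
  rw [hsum] at this
  linear_combination this + mul_nonneg hq (add_nonneg ((h0 0).trans (hle 0)) hq)

end CyclicPairSum

section Blowup

def classCard {n : ℕ} (G0 : Finset (Fin 5 × Fin n)) (c : ZMod 5) : ℕ :=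
  #(G0.filter fun v => (v.1 : ZMod 5) = c)

variable {n : ℕ} (G0 : Finset (Fin 5 × Fin n))

lemma classCard_le (c : ZMod 5) : classCard G0 c ≤ n := by
  refine (card_le_card_of_injOn Prod.snd (fun v _ => mem_coe.2 (mem_univ _)) ?_).trans_eq
    (card_fin n)
  intro v hv w hw hvw
  simp only [coe_filter, Set.mem_ofPred_eq] at hv hw
  -- `ZMod 5` is `Fin 5`, and the coercion `(v.1 : ZMod 5)` is `v.1` itself.
  exact Prod.ext (hv.2.trans hw.2.symm) hvw

lemma sum_classCard : ∑ c, classCard G0 c = #G0 :=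
  (card_eq_sum_card_fiberwise fun _ _ => mem_univ _).symm

def forwardPairs : Finset ((Fin 5 × Fin n) × (Fin 5 × Fin n)) :=
  (G0 ×ˢ G0).filter fun p => (p.2.1 : ZMod 5) = p.1.1 + 1

lemma card_forwardPairs : #(forwardPairs G0) = ∑ c, classCard G0 c * classCard G0 (c + 1) := by
  rw [card_eq_sum_card_fiberwise (f := fun p => (p.1.1 : ZMod 5)) fun p _ => mem_univ _]
  refine sum_congr rfl fun c _ => ?_
  rw [classCard, classCard, ← card_product]
  congr 1
  ext ⟨x, y⟩
  simp only [forwardPairs, mem_filter, mem_product]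
  constructor
  · rintro ⟨⟨⟨hx, hy⟩, hxy⟩, rfl⟩
    exact ⟨⟨hx, rfl⟩, hy, hxy⟩
  · rintro ⟨⟨hx, rfl⟩, hy, hxy⟩
    exact ⟨⟨⟨hx, hy⟩, hxy⟩, rfl⟩

-- Every edge of the blow-up is the image of exactly one forward pair.
lemma edgesIn_C5blowup_eq_card_forwardPairs :
    edgesIn (C5blowup n) G0 = #(forwardPairs G0) := by
  have himage : edgesIn (C5blowup n) G0 = #((forwardPairs G0).image fun p => s(p.1, p.2)) := by
    unfold edgesIn
    congr 1
    ext e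
    induction e using Sym2.ind with | _ x y => ?_
    simp only [mem_filter, SimpleGraph.mem_edgeFinset, SimpleGraph.mem_edgeSet, Sym2.mem_iff,
      forall_eq_or_imp, forall_eq, mem_image, forwardPairs, mem_product, Sym2.eq_iff]
    constructor
    · rintro ⟨hxy | hyx, hx, hy⟩
      · exact ⟨(x, y), ⟨⟨hx, hy⟩, hxy⟩, .inl ⟨rfl, rfl⟩⟩
      · exact ⟨(y, x), ⟨⟨hy, hx⟩, hyx⟩, .inr ⟨rfl, rfl⟩⟩
    · rintro ⟨⟨u, v⟩, ⟨⟨hu, hv⟩, huv⟩, ⟨rfl, rfl⟩ | ⟨rfl, rfl⟩⟩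
      · exact ⟨.inl huv, hu, hv⟩
      · exact ⟨.inr huv, hv, hu⟩
  rw [himage, card_image_of_injOn]
  rintro ⟨x, y⟩ hxy ⟨x', y'⟩ hxy' h
  simp only [forwardPairs, coe_filter, Set.mem_ofPred_eq] at hxy hxy'
  rcases Sym2.eq_iff.1 h with h | ⟨rfl, rfl⟩
  · exact Prod.ext h.1 h.2
  · rw [hxy'.2] at hxy
    exact absurd hxy.2 ((by decide : ∀ z : ZMod 5, z ≠ z + 1 + 1) _)

lemma edgesIn_C5blowup : edgesIn (C5blowup n) G0 = cyclicPairSum (classCard G0) := by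
  rw [edgesIn_C5blowup_eq_card_forwardPairs, card_forwardPairs, cyclicPairSum]

end Blowup

theorem stmt_12_general (n p q : ℕ) (hp : p < 5)
    (G0 : Finset (Fin 5 × Fin n)) (hcard : G0.card = p * n + q) :
    edgesIn (C5blowup n) G0 ≥
      if p ≤ 1 then 0
      else if p = 2 then q * n
      else if p = 3 then n ^ 2 + 2 * q * n
      else 3 * n ^ 2 + 2 * q * n := by
  set a : ZMod 5 → ℤ := fun c => classCard G0 c
  have hedges : (edgesIn (C5blowup n) G0 : ℤ) = cyclicPairSum a := by
    simp [edgesIn_C5blowup, cyclicPairSum, a]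
  have hsum : ∑ c, a c = p * n + q := by
    simp only [a]; exact_mod_cast (sum_classCard G0).trans hcard
  have hle : ∀ c, a c ≤ n := fun c => by simp only [a]; exact_mod_cast classCard_le G0 c
  have hlower := two_mul_mul_sum_sub_le_cyclicPairSum hle
  rw [hsum] at hlower
  interval_cases p <;> norm_num <;> zify <;> rw [hedges] <;> push_cast at hsum hlower
  · exact mul_le_cyclicPairSum_of_sum_eq (fun c => Int.natCast_nonneg _) hle q.cast_nonneg hsum
  · linear_combination hlower
  · linear_combination hlower

theorem stmt_12 (n p q : ℕ) (hn : 1 ≤ n) (hp : p < 5) (hq : q < n)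
    (G0 : Finset (Fin 5 × Fin n)) (hcard : G0.card = p * n + q) :
    edgesIn (C5blowup n) G0 ≥
      if p ≤ 1 then 0
      else if p = 2 then q * n
      else if p = 3 then n ^ 2 + 2 * q * n
      else 3 * n ^ 2 + 2 * q * n :=
  stmt_12_general n p q hp G0 hcard
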